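/- With the truncated approximation Q of A, the spectral norm of I − A^{1/2} Q⁻¹ A^{1/2} equals 1 − σ_n/σ_{N+1}; in particular the matrix A^{1/2} Q⁻¹ A^{1/2} has eigenvalues 1 (with multiplicity at least N+1) and σ_i/σ_{N+1} for i = N+1, …, n, all lying in the interval [σ_n/σ_{N+1}, 1]. -/

import Mathlib

/-!
Everything is diagonal in the orthonormal basis `u`. The positive definite `S` with `S² = A` must
act as `√σᵢ` on `uᵢ`, and `Q⁻¹` acts as `λᵢ⁻¹`, where `λᵢ` is the `i`-th eigenvalue of `Q`; so
`S Q⁻¹ S` acts as `σᵢ / λᵢ`, which is `1` for `i ≤ N` and `σᵢ / σ_{N+1}` beyond. Thus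
`I - S Q⁻¹ S` is orthogonally similar to a diagonal matrix with entries in
`[0, 1 - σₙ / σ_{N+1}]`, and its spectral norm is the largest entry, attained at `uₙ`.
-/

open Matrix

namespace Matrix

variable {ι : Type*} [Fintype ι]

theorem sqrt_dotProduct_self_smul (c : ℝ) (v : ι → ℝ) :
    √((c • v) ⬝ᵥ (c • v)) = |c| * √(v ⬝ᵥ v) := by
  rw [smul_dotProduct, dotProduct_smul, smul_smul, smul_eq_mul, Real.sqrt_mul (mul_self_nonneg c),
    Real.sqrt_mul_self_eq_abs]

theorem mul_mul_mulVec_eq_smul {R : Type*} [CommSemiring R] {B C D : Matrix ι ι R} {v : ι → R}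
    {b c d : R} (hB : B *ᵥ v = b • v) (hC : C *ᵥ v = c • v) (hD : D *ᵥ v = d • v) :
    (B * C * D) *ᵥ v = (b * c * d) • v := by
  rw [← mulVec_mulVec, ← mulVec_mulVec, hD, mulVec_smul, hC, mulVec_smul,
    mulVec_smul, hB, smul_smul, smul_smul]
  congr 1
  ring

variable [DecidableEq ι]

theorem dotProduct_self_mulVec_of_transpose_mul_eq_one {U : Matrix ι ι ℝ} (hU : Uᵀ * U = 1)
    (v : ι → ℝ) : (U *ᵥ v) ⬝ᵥ (U *ᵥ v) = v ⬝ᵥ v := by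
  rw [dotProduct_mulVec, ← vecMul_transpose, vecMul_vecMul, hU, vecMul_one]

theorem dotProduct_self_diagonal_mulVec_le {c : ι → ℝ} {m : ℝ} (hc : ∀ i, |c i| ≤ m)
    (v : ι → ℝ) : (diagonal c *ᵥ v) ⬝ᵥ (diagonal c *ᵥ v) ≤ m ^ 2 * (v ⬝ᵥ v) := by
  simp only [dotProduct, mulVec_diagonal, Finset.mul_sum]
  refine Finset.sum_le_sum fun i _ => ?_
  have hci : c i ^ 2 ≤ m ^ 2 := sq_le_sq' (abs_le.mp (hc i)).1 (abs_le.mp (hc i)).2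
  nlinarith [mul_self_nonneg (v i)]

theorem of_mul_transpose_eq_one_of_orthonormal {u : ι → ι → ℝ}
    (hu : ∀ i j, u i ⬝ᵥ u j = if i = j then (1 : ℝ) else 0) :
    of u * (of u)ᵀ = 1 := by
  ext i j
  simpa [mul_apply, one_apply, dotProduct] using hu i j

theorem eq_transpose_mul_diagonal_mul {U B : Matrix ι ι ℝ} (hU : U * Uᵀ = 1) {c : ι → ℝ}
    (hB : ∀ i, B *ᵥ U i = c i • U i) : B = Uᵀ * diagonal c * U := by
  have hBU : B * Uᵀ = Uᵀ * diagonal c := by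
    ext i j
    rw [mul_diagonal, transpose_apply, mul_comm]
    exact congrFun (hB j) i
  rw [← hBU, mul_assoc, mul_eq_one_comm.mp hU, mul_one]

theorem transpose_mul_diagonal_mul_mulVec_row {U : Matrix ι ι ℝ} (hU : U * Uᵀ = 1) (c : ι → ℝ)
    (i : ι) : (Uᵀ * diagonal c * U) *ᵥ U i = c i • U i := by
  have hUi : U *ᵥ U i = Pi.single i 1 := by
    rw [← one_mulVec (Pi.single i 1), ← hU, ← mulVec_mulVec, mulVec_single_one]
    rfl
  rw [← mulVec_mulVec, ← mulVec_mulVec, hUi, diagonal_mulVec_single, mul_one, mulVec_single,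
    op_smul_eq_smul]
  rfl

theorem inv_mulVec_row {U B : Matrix ι ι ℝ} (hU : U * Uᵀ = 1) {c : ι → ℝ}
    (hB : ∀ i, B *ᵥ U i = c i • U i) (hc : ∀ i, c i ≠ 0) (i : ι) :
    B⁻¹ *ᵥ U i = (c i)⁻¹ • U i := by
  have hBinv : B⁻¹ = Uᵀ * diagonal c⁻¹ * U := by
    refine inv_eq_right_inv ?_
    rw [eq_transpose_mul_diagonal_mul hU hB]
    simp only [mul_assoc, ← mul_assoc U, hU, one_mul]
    rw [← mul_assoc (diagonal c), diagonal_mul_diagonal]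
    simp only [Pi.inv_apply, mul_inv_cancel₀ (hc _), diagonal_one, one_mul,
      mul_eq_one_comm.mp hU]
  rw [hBinv, transpose_mul_diagonal_mul_mulVec_row hU, Pi.inv_apply]

theorem sqrt_dotProduct_self_mulVec_le {U B : Matrix ι ι ℝ} (hU : U * Uᵀ = 1) {c : ι → ℝ}
    (hB : ∀ i, B *ᵥ U i = c i • U i) {m : ℝ} (hc : ∀ i, |c i| ≤ m) (v : ι → ℝ) :
    √((B *ᵥ v) ⬝ᵥ (B *ᵥ v)) ≤ m * √(v ⬝ᵥ v) := by
  cases isEmpty_or_nonempty ι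
  · simp [dotProduct]
  have hm : 0 ≤ m := (abs_nonneg _).trans (hc (Classical.arbitrary ι))
  have hUt : Uᵀᵀ * Uᵀ = 1 := by rwa [transpose_transpose]
  calc √((B *ᵥ v) ⬝ᵥ (B *ᵥ v)) = √((diagonal c *ᵥ (U *ᵥ v)) ⬝ᵥ (diagonal c *ᵥ (U *ᵥ v))) := by
        rw [eq_transpose_mul_diagonal_mul hU hB, ← mulVec_mulVec, ← mulVec_mulVec,
          dotProduct_self_mulVec_of_transpose_mul_eq_one hUt]
    _ ≤ √(m ^ 2 * ((U *ᵥ v) ⬝ᵥ (U *ᵥ v))) :=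
        Real.sqrt_le_sqrt (dotProduct_self_diagonal_mulVec_le hc _)
    _ = m * √(v ⬝ᵥ v) := by
        rw [dotProduct_self_mulVec_of_transpose_mul_eq_one (mul_eq_one_comm.mp hU),
          Real.sqrt_mul (sq_nonneg m), Real.sqrt_sq hm]

theorem PosDef.mulVec_eq_sqrt_smul {S : Matrix ι ι ℝ} (hS : S.PosDef) {v : ι → ℝ} {s : ℝ}
    (hs : 0 ≤ s) (hSSv : S *ᵥ (S *ᵥ v) = s • v) : S *ᵥ v = √s • v := by
  -- `S + √s` is positive definite, hence injective, and kills `S v - √s v`.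
  have hT : (S + √s • 1).PosDef := hS.add_posSemidef (PosSemidef.one.smul (Real.sqrt_nonneg s))
  refine sub_eq_zero.mp (mulVec_injective_iff_isUnit.mpr hT.isUnit ?_)
  rw [mulVec_zero, add_mulVec, smul_mulVec, one_mulVec, mulVec_sub, mulVec_smul, hSSv, smul_sub,
    smul_smul, Real.mul_self_sqrt hs]
  abel

end Matrix

theorem ite_div_mem_Icc_of_antitone {ι : Type*} [LinearOrder ι] {σ : ι → ℝ}
    (hσpos : ∀ i, 0 < σ i) (hσ : Antitone σ) {K L : ι} (hL : ∀ j, j ≤ L) (i : ι) :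
    (if i < K then (1 : ℝ) else σ i / σ K) ∈ Set.Icc (σ L / σ K) 1 := by
  have hσK := hσpos K
  split_ifs with hi
  · exact ⟨div_le_one_of_le₀ (hσ (hL K)) hσK.le, le_rfl⟩
  · exact ⟨div_le_div_of_nonneg_right (hσ (hL i)) hσK.le,
      div_le_one_of_le₀ (hσ (not_lt.mp hi)) hσK.le⟩

/-- With the truncated approximation `Q` of `A`, the spectral
norm of `I − A^{1/2} Q⁻¹ A^{1/2}` equals `1 − σ_n/σ_{N+1}` (expressed as: the
Euclidean operator bound holds for every vector and is attained on some nonzero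
vector); in particular `A^{1/2} Q⁻¹ A^{1/2}` has the `u_i` as eigenvectors with
eigenvalue `1` for `i ≤ N` (0-based: `i < N`, and also `i = N`) and `σ_i/σ_{N+1}`
otherwise, all lying in `[σ_n/σ_{N+1}, 1]`.  `S` denotes the positive definite
square root of `A`. -/
theorem stmt4 {n N : ℕ} (hNn : N < n)
    (A Q : Matrix (Fin n) (Fin n) ℝ)
    (σ : Fin n → ℝ) (u : Fin n → Fin n → ℝ)
    (hσpos : ∀ i, 0 < σ i)
    (hσmono : ∀ i j : Fin n, i ≤ j → σ j ≤ σ i)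
    (hortho : ∀ i j : Fin n, u i ⬝ᵥ u j = if i = j then (1 : ℝ) else 0)
    (hAeig : ∀ i, A *ᵥ u i = σ i • u i)
    (hQeig : ∀ i : Fin n, Q *ᵥ u i = (if (i : ℕ) < N then σ i else σ ⟨N, hNn⟩) • u i)
    (S : Matrix (Fin n) (Fin n) ℝ) (hS : S.PosDef) (hSS : S * S = A) :
    (∀ v : Fin n → ℝ,
      Real.sqrt (((1 - S * Q⁻¹ * S) *ᵥ v) ⬝ᵥ ((1 - S * Q⁻¹ * S) *ᵥ v))
        ≤ (1 - σ ⟨n - 1, by omega⟩ / σ ⟨N, hNn⟩) * Real.sqrt (v ⬝ᵥ v)) ∧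
    (∃ v : Fin n → ℝ, v ≠ 0 ∧
      Real.sqrt (((1 - S * Q⁻¹ * S) *ᵥ v) ⬝ᵥ ((1 - S * Q⁻¹ * S) *ᵥ v))
        = (1 - σ ⟨n - 1, by omega⟩ / σ ⟨N, hNn⟩) * Real.sqrt (v ⬝ᵥ v)) ∧
    (∀ i : Fin n, (S * Q⁻¹ * S) *ᵥ u i
        = (if (i : ℕ) < N then (1 : ℝ) else σ i / σ ⟨N, hNn⟩) • u i) ∧
    (∀ i : Fin n, (if (i : ℕ) < N then (1 : ℝ) else σ i / σ ⟨N, hNn⟩)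
        ∈ Set.Icc (σ ⟨n - 1, by omega⟩ / σ ⟨N, hNn⟩) 1) := by
  set L : Fin n := ⟨n - 1, by omega⟩
  set d : Fin n → ℝ := fun i => if (i : ℕ) < N then 1 else σ i / σ ⟨N, hNn⟩ with hd
  have hU : of u * (of u)ᵀ = 1 := of_mul_transpose_eq_one_of_orthonormal hortho
  have hSu i : S *ᵥ u i = √(σ i) • u i :=
    hS.mulVec_eq_sqrt_smul (hσpos i).le (by rw [mulVec_mulVec, hSS, hAeig])
  have hQinvu i : Q⁻¹ *ᵥ u i = (if (i : ℕ) < N then σ i else σ ⟨N, hNn⟩)⁻¹ • u i :=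
    inv_mulVec_row hU hQeig (fun j => by split_ifs <;> exact (hσpos _).ne') i
  have hSQSu i : (S * Q⁻¹ * S) *ᵥ u i = d i • u i := by
    rw [mul_mul_mulVec_eq_smul (hSu i) (hQinvu i) (hSu i), mul_right_comm,
      Real.mul_self_sqrt (hσpos i).le]
    congr 1
    simp only [hd]
    split_ifs
    exacts [mul_inv_cancel₀ (hσpos i).ne', div_eq_mul_inv _ _ |>.symm]
  have hMu i : (1 - S * Q⁻¹ * S) *ᵥ u i = (1 - d i) • u i := by
    rw [sub_mulVec, one_mulVec, hSQSu, sub_smul, one_smul]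
  have hdIcc : ∀ i, d i ∈ Set.Icc (σ L / σ ⟨N, hNn⟩) 1 :=
    ite_div_mem_Icc_of_antitone hσpos hσmono fun j => Fin.le_def.mpr (Nat.le_sub_one_of_lt j.isLt)
  have hMbound i : |1 - d i| ≤ 1 - σ L / σ ⟨N, hNn⟩ := by
    obtain ⟨hlo, hhi⟩ := hdIcc i
    exact abs_le.mpr ⟨by linarith, by linarith⟩
  refine ⟨sqrt_dotProduct_self_mulVec_le hU hMu hMbound, ⟨u L, ?_, ?_⟩, hSQSu, hdIcc⟩
  · exact fun h => by simpa [h] using hortho L L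
  · have hdL : d L = σ L / σ ⟨N, hNn⟩ := if_neg (by simp only [L]; omega)
    rw [hMu, sqrt_dotProduct_self_smul, hdL,
      abs_of_nonneg (sub_nonneg.mpr ((hdIcc L).1.trans (hdIcc L).2))]
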